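/- Under SCAR and the PU condition, the quantity π E[ℓ(g(X)) | S=1] + E[ℓ(-g(X)) | S=-1] - π E[ℓ(-g(X)) | S=1] (the case-control risk formula applied with the unlabeled sample in place of the general population) equals the true risk E[ℓ(Y g(X))] if and only if P(S=1) · (E[ℓ(-g(X)) | S=-1] - E[ℓ(-g(X)) | S=1]) = 0; in particular, if P(S=1) > 0, equality holds if and only if E[ℓ(-g(X)) | S=1] = E[ℓ(-g(X)) | S=-1]. -/
import Mathlib


open scoped Classical
open Finset

/-- Probability of an event `A` under pmf `P` on a finite sample space. -/
noncomputable def pr {Ω : Type*} [Fintype Ω] (P : Ω → ℝ) (A : Ω → Prop) : ℝ :=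
  ∑ ω, if A ω then P ω else 0

/-- Conditional expectation `E[f | A]` under pmf `P`. -/
noncomputable def cex {Ω : Type*} [Fintype Ω] (P : Ω → ℝ) (A : Ω → Prop) (f : Ω → ℝ) : ℝ :=
  (∑ ω, if A ω then P ω * f ω else 0) / pr P A

/-- Expectation `E[f]` under pmf `P`. -/
noncomputable def ex {Ω : Type*} [Fintype Ω] (P : Ω → ℝ) (f : Ω → ℝ) : ℝ :=
  ∑ ω, P ω * f ω

noncomputable def sube {Ω : Type*} [Fintype Ω] (P : Ω → ℝ) (A : Ω → Prop) (f : Ω → ℝ) : ℝ :=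
  ∑ ω, if A ω then P ω * f ω else 0

lemma cex_eq {Ω : Type*} [Fintype Ω] (P : Ω → ℝ) (A : Ω → Prop) (f : Ω → ℝ) :
    cex P A f = sube P A f / pr P A := rfl

lemma pr_nonneg {Ω : Type*} [Fintype Ω] {P : Ω → ℝ} (hP : ∀ ω, 0 ≤ P ω) (A : Ω → Prop) :
    0 ≤ pr P A :=
  Finset.sum_nonneg fun ω _ => by by_cases h : A ω <;> simp [h, hP ω]

lemma pr_congr {Ω : Type*} [Fintype Ω] (P : Ω → ℝ) {A B : Ω → Prop}
    (h : ∀ ω, A ω ↔ B ω) : pr P A = pr P B :=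
  Finset.sum_congr rfl fun ω _ => if_congr (h ω) rfl rfl

lemma pr_mono {Ω : Type*} [Fintype Ω] {P : Ω → ℝ} (hP : ∀ ω, 0 ≤ P ω) {A B : Ω → Prop}
    (h : ∀ ω, A ω → B ω) : pr P A ≤ pr P B :=
  Finset.sum_le_sum fun ω _ => by
    by_cases ha : A ω
    · simp [ha, h ω ha]
    · by_cases hb : B ω <;> simp [ha, hb, hP ω]

lemma fiber_sum {Ω 𝒳 : Type*} [Fintype Ω] [Fintype 𝒳]
    (P : Ω → ℝ) (X : Ω → 𝒳) (Q : Ω → Prop) (h : 𝒳 → ℝ) :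
    sube P Q (fun ω => h (X ω))
      = ∑ x, h x * pr P (fun ω => Q ω ∧ X ω = x) := by
  unfold sube
  have key : ∀ ω, (if Q ω then P ω * h (X ω) else 0)
      = ∑ x, h x * (if Q ω ∧ X ω = x then P ω else 0) := by
    intro ω
    by_cases hq : Q ω
    · rw [Finset.sum_eq_single (X ω)]
      · simp [hq, mul_comm]
      · intro b _ hb
        have : ¬ (X ω = b) := fun hx => hb hx.symm
        simp [this]
      · simp
    · simp [hq]
  simp_rw [key]
  rw [Finset.sum_comm]
  simp [pr, Finset.mul_sum]

lemma key_eq {Ω 𝒳 : Type*} [Fintype Ω] [Fintype 𝒳]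
    (P : Ω → ℝ) (hP : ∀ ω, 0 ≤ P ω)
    (X : Ω → 𝒳) (Y S : Ω → ℤ)
    (hY : ∀ ω, Y ω = 1 ∨ Y ω = -1)
    (hPU0 : ∀ ω, Y ω = -1 → S ω = 1 → P ω = 0)
    (hSCAR : ∀ x : 𝒳, 0 < pr P (fun ω => Y ω = 1 ∧ X ω = x) →
      pr P (fun ω => S ω = 1 ∧ Y ω = 1 ∧ X ω = x) / pr P (fun ω => Y ω = 1 ∧ X ω = x)
        = pr P (fun ω => S ω = 1 ∧ Y ω = 1) / pr P (fun ω => Y ω = 1))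
    (hS1 : 0 < pr P (fun ω => S ω = 1))
    (hπpos : 0 < pr P (fun ω => Y ω = 1))
    (h : 𝒳 → ℝ) :
    pr P (fun ω => Y ω = 1) * cex P (fun ω => S ω = 1) (fun ω => h (X ω))
      = sube P (fun ω => Y ω = 1) (fun ω => h (X ω)) := by
  have hps : pr P (fun ω => S ω = 1) = pr P (fun ω => S ω = 1 ∧ Y ω = 1) := by
    unfold pr
    refine Finset.sum_congr rfl fun ω _ => ?_
    rcases hY ω with hy | hy
    · simp [hy]
    · by_cases hs : S ω = 1 <;> simp [hy, hs, hPU0 ω hy]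
  have hs1ypos : 0 < pr P (fun ω => S ω = 1 ∧ Y ω = 1) := hps ▸ hS1
  have hratio : ∀ x : 𝒳, pr P (fun ω => (S ω = 1 ∧ Y ω = 1) ∧ X ω = x)
      = pr P (fun ω => S ω = 1 ∧ Y ω = 1) / pr P (fun ω => Y ω = 1)
          * pr P (fun ω => Y ω = 1 ∧ X ω = x) := by
    intro x
    have hcongr : pr P (fun ω => (S ω = 1 ∧ Y ω = 1) ∧ X ω = x)
        = pr P (fun ω => S ω = 1 ∧ Y ω = 1 ∧ X ω = x) :=
      pr_congr P fun ω => and_assoc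
    rw [hcongr]
    rcases (pr_nonneg hP (fun ω => Y ω = 1 ∧ X ω = x)).lt_or_eq with hm | hm
    · have hsc := hSCAR x hm
      rw [div_eq_div_iff hm.ne' hπpos.ne'] at hsc
      field_simp
      linear_combination hsc
    · have h0 : pr P (fun ω => S ω = 1 ∧ Y ω = 1 ∧ X ω = x) = 0 := by
        refine le_antisymm ?_ (pr_nonneg hP _)
        calc pr P (fun ω => S ω = 1 ∧ Y ω = 1 ∧ X ω = x)
            ≤ pr P (fun ω => Y ω = 1 ∧ X ω = x) := pr_mono hP fun ω hw => hw.2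
          _ = 0 := hm.symm
      rw [h0, ← hm]; ring
  have hnum : sube P (fun ω => S ω = 1) (fun ω => h (X ω))
      = pr P (fun ω => S ω = 1 ∧ Y ω = 1) / pr P (fun ω => Y ω = 1)
          * sube P (fun ω => Y ω = 1) (fun ω => h (X ω)) := by
    have e1 : sube P (fun ω => S ω = 1) (fun ω => h (X ω))
        = sube P (fun ω => S ω = 1 ∧ Y ω = 1) (fun ω => h (X ω)) := by
      unfold sube
      refine Finset.sum_congr rfl fun ω _ => ?_
      rcases hY ω with hy | hy
      · simp [hy]
      · by_cases hs : S ω = 1 <;> simp [hy, hs, hPU0 ω hy]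
    rw [e1, fiber_sum P X (fun ω => S ω = 1 ∧ Y ω = 1) h,
      fiber_sum P X (fun ω => Y ω = 1) h, Finset.mul_sum]
    refine Finset.sum_congr rfl fun x _ => ?_
    rw [hratio x]; ring
  rw [cex_eq, hnum, hps]
  field_simp

theorem stmt8 {Ω 𝒳 : Type*} [Fintype Ω] [Fintype 𝒳]
    (P : Ω → ℝ) (hP : ∀ ω, 0 ≤ P ω) (hPsum : ∑ ω, P ω = 1)
    (X : Ω → 𝒳) (Y S : Ω → ℤ)
    (hY : ∀ ω, Y ω = 1 ∨ Y ω = -1) (hS : ∀ ω, S ω = 1 ∨ S ω = -1)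
    (hPU : pr P (fun ω => Y ω = -1 ∧ S ω = 1) = 0)
    (hSCAR : ∀ x : 𝒳, 0 < pr P (fun ω => Y ω = 1 ∧ X ω = x) →
      pr P (fun ω => S ω = 1 ∧ Y ω = 1 ∧ X ω = x) / pr P (fun ω => Y ω = 1 ∧ X ω = x)
        = pr P (fun ω => S ω = 1 ∧ Y ω = 1) / pr P (fun ω => Y ω = 1))
    (hS1 : 0 < pr P (fun ω => S ω = 1)) (hSm1 : 0 < pr P (fun ω => S ω = -1))
    (π : ℝ) (hπ : π = pr P (fun ω => Y ω = 1))
    (g : 𝒳 → ℝ) (ℓ : ℝ → ℝ) :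
    (π * cex P (fun ω => S ω = 1) (fun ω => ℓ (g (X ω)))
        + cex P (fun ω => S ω = -1) (fun ω => ℓ (-g (X ω)))
        - π * cex P (fun ω => S ω = 1) (fun ω => ℓ (-g (X ω)))
      = ex P (fun ω => ℓ ((Y ω : ℝ) * g (X ω)))
      ↔ pr P (fun ω => S ω = 1)
          * (cex P (fun ω => S ω = -1) (fun ω => ℓ (-g (X ω)))
              - cex P (fun ω => S ω = 1) (fun ω => ℓ (-g (X ω)))) = 0)
    ∧ (π * cex P (fun ω => S ω = 1) (fun ω => ℓ (g (X ω)))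
        + cex P (fun ω => S ω = -1) (fun ω => ℓ (-g (X ω)))
        - π * cex P (fun ω => S ω = 1) (fun ω => ℓ (-g (X ω)))
      = ex P (fun ω => ℓ ((Y ω : ℝ) * g (X ω)))
      ↔ cex P (fun ω => S ω = 1) (fun ω => ℓ (-g (X ω)))
          = cex P (fun ω => S ω = -1) (fun ω => ℓ (-g (X ω)))) := by
  have hPU0 : ∀ ω, Y ω = -1 → S ω = 1 → P ω = 0 := by
    intro ω hy hs
    unfold pr at hPU
    have h0 := (Finset.sum_eq_zero_iff_of_nonneg (fun ω _ => by
      by_cases h : Y ω = -1 ∧ S ω = 1 <;> simp [h, hP ω])).mp hPU ω (Finset.mem_univ ω)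
    simpa [hy, hs] using h0
  have hπpos : 0 < pr P (fun ω => Y ω = 1) := by
    have h1 : pr P (fun ω => S ω = 1) = pr P (fun ω => S ω = 1 ∧ Y ω = 1) := by
      unfold pr
      refine Finset.sum_congr rfl fun ω _ => ?_
      rcases hY ω with hy | hy
      · simp [hy]
      · by_cases hs : S ω = 1 <;> simp [hy, hs, hPU0 ω hy]
    have h2 : pr P (fun ω => S ω = 1 ∧ Y ω = 1) ≤ pr P (fun ω => Y ω = 1) :=
      pr_mono hP fun ω hw => hw.2
    linarith
  have hsplitS : ∀ f : Ω → ℝ, ex P f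
      = sube P (fun ω => S ω = 1) f + sube P (fun ω => S ω = -1) f := by
    intro f
    unfold ex sube
    rw [← Finset.sum_add_distrib]
    exact Finset.sum_congr rfl fun ω _ => by rcases hS ω with hs | hs <;> simp [hs]
  set p1 := pr P (fun ω => S ω = 1) with hp1def
  set pm := pr P (fun ω => S ω = -1) with hpmdef
  set a1 := cex P (fun ω => S ω = 1) (fun ω => ℓ (g (X ω))) with ha1def
  set c1 := cex P (fun ω => S ω = 1) (fun ω => ℓ (-g (X ω))) with hc1def
  set cm := cex P (fun ω => S ω = -1) (fun ω => ℓ (-g (X ω))) with hcmdef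
  set T1 := sube P (fun ω => Y ω = 1) (fun ω => ℓ (g (X ω))) with hT1def
  set T := sube P (fun ω => Y ω = 1) (fun ω => ℓ (-g (X ω))) with hTdef
  set E := ex P (fun ω => ℓ (-g (X ω))) with hEdef
  have h1 : π * a1 = T1 := by
    rw [hπ, ha1def, hT1def]
    exact key_eq P hP X Y S hY hPU0 hSCAR hS1 hπpos (fun x => ℓ (g x))
  have h2 : π * c1 = T := by
    rw [hπ, hc1def, hTdef]
    exact key_eq P hP X Y S hY hPU0 hSCAR hS1 hπpos (fun x => ℓ (-g x))
  have h3 : ex P (fun ω => ℓ ((Y ω : ℝ) * g (X ω))) = T1 + (E - T) := by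
    have e1 : ex P (fun ω => ℓ ((Y ω : ℝ) * g (X ω)))
        = T1 + ∑ ω, (if Y ω = 1 then 0 else P ω * ℓ (-g (X ω))) := by
      rw [hT1def]
      unfold ex sube
      rw [← Finset.sum_add_distrib]
      refine Finset.sum_congr rfl fun ω _ => ?_
      rcases hY ω with hy | hy <;> simp [hy]
    have e2 : E = T + ∑ ω, (if Y ω = 1 then 0 else P ω * ℓ (-g (X ω))) := by
      rw [hEdef, hTdef]
      unfold ex sube
      rw [← Finset.sum_add_distrib]
      refine Finset.sum_congr rfl fun ω _ => ?_
      by_cases hy : Y ω = 1 <;> simp [hy]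
    rw [e1, e2]; ring
  have h4 : E = c1 * p1 + cm * pm := by
    have e1 : sube P (fun ω => S ω = 1) (fun ω => ℓ (-g (X ω))) = c1 * p1 := by
      rw [hc1def, cex_eq, ← hp1def, div_mul_cancel₀ _ (ne_of_gt hS1)]
    have e2 : sube P (fun ω => S ω = -1) (fun ω => ℓ (-g (X ω))) = cm * pm := by
      rw [hcmdef, cex_eq, ← hpmdef, div_mul_cancel₀ _ (ne_of_gt hSm1)]
    rw [hEdef, hsplitS (fun ω => ℓ (-g (X ω))), e1, e2]
  have h5 : p1 + pm = 1 := by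
    have e0 : ex P (fun _ => (1 : ℝ)) = 1 := by
      unfold ex; simpa using hPsum
    have e1 : sube P (fun ω => S ω = 1) (fun _ => (1 : ℝ)) = p1 := by
      rw [hp1def]; unfold sube pr
      exact Finset.sum_congr rfl fun ω _ => by by_cases hs : S ω = 1 <;> simp [hs]
    have e2 : sube P (fun ω => S ω = -1) (fun _ => (1 : ℝ)) = pm := by
      rw [hpmdef]; unfold sube pr
      exact Finset.sum_congr rfl fun ω _ => by by_cases hs : S ω = -1 <;> simp [hs]
    rw [← e0, hsplitS (fun _ => (1 : ℝ)), e1, e2]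
  have key1 : p1 * (cm - c1) = cm - E := by linear_combination h4 + cm * h5
  have hiff1 : (π * a1 + cm - π * c1 = ex P (fun ω => ℓ ((Y ω : ℝ) * g (X ω))))
      ↔ p1 * (cm - c1) = 0 := by
    rw [h3, h1, h2, key1]
    constructor <;> intro hh <;> linarith
  refine ⟨hiff1, hiff1.trans ?_⟩
  constructor
  · intro hh
    have h0 := (mul_eq_zero.mp hh).resolve_left (ne_of_gt hS1)
    linarith
  · intro hh; rw [hh]; ring
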